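/- Let ξ, ζ, A, P be positive real numbers with ζ < ξ, and let α ∈ (1, 2). Then for every K with 0 < K < P and K ≤ A, the second derivative of S_α at K is strictly positive: S_α''(K) > 0. In particular, S_α is strictly convex on any subinterval of (0, min{P, A}]. -/

import Mathlib

/-!
Write `u = log₂ (P / K)` and `c = log 2`. Differentiating twice,
`S_α''(K) = ξ A (α (α - 1) u ^ (α - 2) + 3 c α u ^ (α - 1) + 2 c² u ^ α) / (c² K³) - ζ / (c K²)`,
so, as `ζ < ξ` and `K ≤ A`, it suffices that the bracket exceeds `c`. For `1 ≤ α ≤ 2`, Bernoulli's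
inequality `u ^ (2 - α) ≤ u + (α - 1)` gives `u ^ (α - 1) + (α - 1) u ^ (α - 2) ≥ 1`, and `1/3 < c < 1`
finishes the estimate. Strict convexity follows from `S_α'' > 0` on the interior.
-/

open Real Set

noncomputable def commStages (ξ ζ A P α K : ℝ) : ℝ :=
  ξ * logb 2 (P / K) ^ α * (A / K) + ζ * logb 2 K

noncomputable def commStagesDeriv (ξ ζ A P α K : ℝ) : ℝ :=
  ζ / (log 2 * K) - ξ * A * (α * logb 2 (P / K) ^ (α - 1) + log 2 * logb 2 (P / K) ^ α)
    / (log 2 * K ^ 2)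

theorem hasDerivAt_logb_two_div {P K : ℝ} (hP : P ≠ 0) (hK : K ≠ 0) :
    HasDerivAt (fun x => logb 2 (P / x)) (-(log 2 * K)⁻¹) K := by
  refine HasDerivAt.congr_deriv ((((hasDerivAt_const K P).fun_div (hasDerivAt_id K) hK).log
    (div_ne_zero hP hK)).div_const (log 2)) ?_
  simp only [id]
  field_simp
  ring

theorem logb_two_div_pos {P K : ℝ} (hK : 0 < K) (hKP : K < P) : 0 < logb 2 (P / K) :=
  logb_pos one_lt_two ((one_lt_div hK).2 hKP)

theorem one_le_rpow_add_mul_rpow_sub_one {t γ : ℝ} (ht : 0 < t) (hγ₀ : 0 ≤ γ) (hγ₁ : γ ≤ 1) :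
    1 ≤ t ^ γ + γ * t ^ (γ - 1) := by
  have bernoulli : t ^ (1 - γ) ≤ t + γ := by
    have h := rpow_one_add_le_one_add_mul_self (s := t - 1) (p := 1 - γ) (by linarith)
      (by linarith) (by linarith)
    rw [add_sub_cancel] at h
    linarith [mul_nonneg hγ₀ ht.le]
  calc (1 : ℝ) = t ^ (γ - 1) * t ^ (1 - γ) := by
        rw [← rpow_add ht, sub_add_sub_cancel, sub_self, rpow_zero]
    _ ≤ t ^ (γ - 1) * (t + γ) := by gcongr
    _ = t ^ γ + γ * t ^ (γ - 1) := by
        rw [rpow_sub_one ht.ne']; field_simp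

noncomputable def commStagesCurv (α u : ℝ) : ℝ :=
  α * (α - 1) * u ^ (α - 2) + 3 * log 2 * α * u ^ (α - 1) + 2 * log 2 ^ 2 * u ^ α

theorem log_two_lt_commStagesCurv {α t : ℝ} (ht : 0 < t) (hα₁ : 1 ≤ α) (hα₂ : α ≤ 2) :
    log 2 < commStagesCurv α t := by
  unfold commStagesCurv
  have hc₁ : 1 / 3 < log 2 := by have := log_two_gt_d9; linarith
  have hc₂ : log 2 < 1 := by have := log_two_lt_d9; linarith
  have key := one_le_rpow_add_mul_rpow_sub_one ht (sub_nonneg.2 hα₁) (by linarith : α - 1 ≤ 1)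
  rw [sub_sub, show (1 : ℝ) + 1 = 2 by norm_num] at key
  have h₁ : 0 < t ^ (α - 1) := rpow_pos_of_pos ht _
  have h₂ : 0 < t ^ α := rpow_pos_of_pos ht _
  linarith [mul_le_mul_of_nonneg_left key (by linarith : 0 ≤ α),
    mul_pos (mul_pos (by linarith : 0 < 3 * log 2 - 1) (by linarith : 0 < α)) h₁,
    mul_pos (pow_pos (by linarith : 0 < log 2) 2) h₂]

section

variable {ξ ζ A P α K : ℝ}

theorem hasDerivAt_commStages (hK : 0 < K) (hKP : K < P) :
    HasDerivAt (commStages ξ ζ A P α) (commStagesDeriv ξ ζ A P α K) K := by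
  have hu := hasDerivAt_logb_two_div (hK.trans hKP).ne' hK.ne'
  have hpow := hu.rpow_const (p := α) (Or.inl (logb_two_div_pos hK hKP).ne')
  refine HasDerivAt.congr_deriv (f := commStages ξ ζ A P α)
    (((hpow.const_mul ξ).mul ((hasDerivAt_const K A).fun_div (hasDerivAt_id K) hK.ne')).add
    (((hasDerivAt_log hK.ne').div_const (log 2)).const_mul ζ)) ?_
  simp only [commStagesDeriv, id]
  have hpow_eq : logb 2 (P / K) ^ α = logb 2 (P / K) ^ (α - 1) * logb 2 (P / K) := by
    rw [← rpow_add_one (logb_two_div_pos hK hKP).ne', sub_add_cancel]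
  rw [hpow_eq]
  have hc := log_pos one_lt_two
  field_simp
  ring

theorem hasDerivAt_commStagesDeriv (hK : 0 < K) (hKP : K < P) :
    HasDerivAt (commStagesDeriv ξ ζ A P α)
      (ξ * A * commStagesCurv α (logb 2 (P / K)) / (log 2 ^ 2 * K ^ 3)
        - ζ / (log 2 * K ^ 2)) K := by
  have hu₀ := logb_two_div_pos hK hKP
  have hu := hasDerivAt_logb_two_div (hK.trans hKP).ne' hK.ne'
  have hc := log_pos one_lt_two
  have hpow₁ := hu.rpow_const (p := α - 1) (Or.inl hu₀.ne')
  have hpow₂ := hu.rpow_const (p := α) (Or.inl hu₀.ne')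
  have hden : HasDerivAt (fun x => log 2 * x ^ 2) (log 2 * (2 * K)) K := by
    simpa using (hasDerivAt_pow 2 K).const_mul (log 2)
  refine HasDerivAt.congr_deriv (f := commStagesDeriv ξ ζ A P α)
    (((hasDerivAt_const K ζ).fun_div ((hasDerivAt_id K).const_mul (log 2))
      (mul_ne_zero hc.ne' hK.ne')).sub
    (((((hpow₁.const_mul α).add (hpow₂.const_mul (log 2))).const_mul (ξ * A)).fun_div hden
      (mul_ne_zero hc.ne' (pow_ne_zero 2 hK.ne'))))) ?_
  simp only [id, Pi.add_apply]
  set u := logb 2 (P / K)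
  have h₁ : u ^ (α - 1) = u ^ (α - 2) * u := by
    rw [← rpow_add_one hu₀.ne']; ring_nf
  have h₂ : u ^ α = u ^ (α - 2) * u * u := by
    rw [← h₁, ← rpow_add_one hu₀.ne']; ring_nf
  rw [commStagesCurv, show α - 1 - 1 = α - 2 by ring, h₁, h₂]
  field_simp
  ring

theorem deriv_deriv_commStages (hK : 0 < K) (hKP : K < P) :
    deriv (deriv (commStages ξ ζ A P α)) K =
      ξ * A * commStagesCurv α (logb 2 (P / K)) / (log 2 ^ 2 * K ^ 3) - ζ / (log 2 * K ^ 2) := by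
  have h : deriv (commStages ξ ζ A P α) =ᶠ[nhds K] commStagesDeriv ξ ζ A P α := by
    filter_upwards [Ioo_mem_nhds hK hKP] with x hx using (hasDerivAt_commStages hx.1 hx.2).deriv
  rw [h.deriv_eq, (hasDerivAt_commStagesDeriv hK hKP).deriv]

theorem deriv_deriv_commStages_pos (hξ : 0 < ξ) (hζξ : ζ ≤ ξ) (hK : 0 < K) (hKP : K < P)
    (hKA : K ≤ A) (hα₁ : 1 ≤ α) (hα₂ : α ≤ 2) :
    0 < deriv (deriv (commStages ξ ζ A P α)) K := by
  rw [deriv_deriv_commStages hK hKP, sub_pos, div_lt_div_iff₀ (by positivity) (by positivity)]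
  have hG := log_two_lt_commStagesCurv (logb_two_div_pos hK hKP) hα₁ hα₂
  set G := commStagesCurv α (logb 2 (P / K))
  have hc := log_pos one_lt_two
  have key : ζ * K * log 2 < ξ * A * G :=
    calc ζ * K * log 2 ≤ ξ * K * log 2 := by gcongr
      _ < ξ * K * G := by gcongr
      _ ≤ ξ * A * G := by gcongr; linarith
  calc ζ * (log 2 ^ 2 * K ^ 3) = ζ * K * log 2 * (log 2 * K ^ 2) := by ring
    _ < ξ * A * G * (log 2 * K ^ 2) := by gcongr

theorem continuousOn_commStages (hP : P ≠ 0) (hα : 0 ≤ α) :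
    ContinuousOn (commStages ξ ζ A P α) (Ioi 0) := by
  unfold commStages logb
  fun_prop (disch := grind)

end

theorem stmt_18_general (ξ ζ A P α : ℝ) (hξ : 0 < ξ) (hP : 0 < P)
    (hζξ : ζ < ξ) (hα : α ∈ Set.Ioo (1 : ℝ) 2)
    (Sα : ℝ → ℝ)
    (hSα : Sα = fun K : ℝ => ξ * Real.logb 2 (P / K) ^ α * (A / K) + ζ * Real.logb 2 K) :
    (∀ K : ℝ, 0 < K → K < P → K ≤ A → 0 < deriv (deriv Sα) K) ∧
    (∀ s : Set ℝ, s ⊆ Set.Ioc 0 (min P A) → Convex ℝ s → StrictConvexOn ℝ s Sα) := by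
  obtain ⟨hα₁, hα₂⟩ := hα
  subst hSα
  have hpos : ∀ K, 0 < K → K < P → K ≤ A → 0 < deriv (deriv (commStages ξ ζ A P α)) K :=
    fun K hK hKP hKA => deriv_deriv_commStages_pos hξ hζξ.le hK hKP hKA hα₁.le hα₂.le
  refine ⟨hpos, fun s hs hconv => strictConvexOn_of_deriv2_pos hconv ?_ fun x hx => ?_⟩
  · exact (continuousOn_commStages hP.ne' (by linarith)).mono fun x hx => (hs hx).1
  · have hx' : x ∈ Ioo 0 (min P A) := by simpa using interior_mono hs hx
    exact hpos x hx'.1 (hx'.2.trans_le (min_le_left _ _)) (hx'.2.le.trans (min_le_right _ _))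

/-- For positive ξ, ζ, A, P with ζ < ξ and α ∈ (1,2), for every K with
0 < K < P and K ≤ A, the second derivative of S_α at K is strictly positive; in particular
S_α is strictly convex on any (convex) subinterval of (0, min{P, A}]. -/
theorem stmt_18 (ξ ζ A P α : ℝ) (hξ : 0 < ξ) (hζ : 0 < ζ) (hA : 0 < A) (hP : 0 < P)
    (hζξ : ζ < ξ) (hα : α ∈ Set.Ioo (1 : ℝ) 2)
    (Sα : ℝ → ℝ)
    (hSα : Sα = fun K : ℝ => ξ * Real.logb 2 (P / K) ^ α * (A / K) + ζ * Real.logb 2 K) :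
    (∀ K : ℝ, 0 < K → K < P → K ≤ A → 0 < deriv (deriv Sα) K) ∧
    (∀ s : Set ℝ, s ⊆ Set.Ioc 0 (min P A) → Convex ℝ s → StrictConvexOn ℝ s Sα) :=
  stmt_18_general ξ ζ A P α hξ hP hζξ hα Sα hSα
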